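/- Let Γ be a subgroup of SL(2, ℂ) and let Δ be a subgroup of Γ of finite index. Then every element of Γ has trace an algebraic integer if and only if every element of Δ has trace an algebraic integer. -/

import Mathlib

/-!
By Cayley–Hamilton, `M² = tr M • M - det M • 1` for a `2 × 2` matrix, so the traces of the powers
of `M` satisfy the recurrence of the Dickson polynomials: `tr (M ^ n) = Dₙ(tr M)` with
`Dₙ = dickson 1 (det M) n`. For `γ ∈ SL(2, ℂ)` this polynomial has integer coefficients and is
monic of degree `n`, so if `tr (γ ^ k)` is an algebraic integer for some `k ≥ 1`, then `tr γ` is a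
root of the monic polynomial `Dₖ - tr (γ ^ k)` with integral coefficients, hence integral.
Every `γ` in `Γ` has such a power in the finite-index subgroup `Δ`.
-/

open Polynomial

namespace Polynomial

variable {R : Type*} [CommRing R] {k : ℕ} {a : R}

theorem natDegree_dickson_le : ∀ n : ℕ, (dickson k a n).natDegree ≤ n
  | 0 => (natDegree_sub_le _ _).trans (by simp)
  | 1 => natDegree_X_le
  | n + 2 => by
    rw [dickson_add_two]
    refine (natDegree_sub_le _ _).trans (max_le ?_ ?_)
    · have := natDegree_dickson_le (n + 1)
      exact natDegree_mul_le.trans (by linarith [natDegree_X_le (R := R)])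
    · have := natDegree_dickson_le n
      exact (natDegree_C_mul_le _ _).trans (by omega)

theorem coeff_dickson_self : ∀ {n : ℕ}, n ≠ 0 → (dickson k a n).coeff n = 1
  | 1, _ => by simp
  | n + 2, _ => by
    rw [dickson_add_two, coeff_sub, coeff_X_mul, coeff_C_mul, coeff_dickson_self n.succ_ne_zero,
      coeff_eq_zero_of_natDegree_lt ((natDegree_dickson_le n).trans_lt (by omega)), mul_zero,
      sub_zero]

theorem dickson_monic {n : ℕ} (hn : n ≠ 0) : (dickson k a n).Monic :=
  monic_of_natDegree_le_of_coeff_eq_one n (natDegree_dickson_le n) (coeff_dickson_self hn)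

theorem natDegree_dickson [Nontrivial R] {n : ℕ} (hn : n ≠ 0) : (dickson k a n).natDegree = n :=
  natDegree_eq_of_le_of_coeff_ne_zero (natDegree_dickson_le n) (by simp [coeff_dickson_self hn])

end Polynomial

namespace Matrix

variable {R : Type*} [CommRing R]

theorem sq_eq_trace_smul_sub_det_smul_fin_two (M : Matrix (Fin 2) (Fin 2) R) :
    M ^ 2 = M.trace • M - M.det • 1 := by
  ext i j
  fin_cases i <;> fin_cases j <;>
    simp [sq, mul_apply, trace_fin_two, det_fin_two] <;> ring

theorem trace_pow_eq_eval_dickson (M : Matrix (Fin 2) (Fin 2) R) :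
    ∀ n : ℕ, (M ^ n).trace = (dickson 1 M.det n).eval M.trace
  | 0 => by norm_num
  | 1 => by simp
  | n + 2 => by
    have hpow : M ^ (n + 2) = M.trace • M ^ (n + 1) - M.det • M ^ n := by
      rw [pow_add, sq_eq_trace_smul_sub_det_smul_fin_two, mul_sub, mul_smul_comm, mul_smul_comm,
        mul_one, ← pow_succ]
    rw [hpow, trace_sub, trace_smul, trace_smul, trace_pow_eq_eval_dickson M n,
      trace_pow_eq_eval_dickson M (n + 1), dickson_add_two]
    simp [smul_eq_mul]

end Matrix

namespace Matrix.SpecialLinearGroup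

variable {R A : Type*} [CommRing R] [CommRing A] [Algebra R A]

theorem trace_pow_eq_aeval_dickson (γ : SpecialLinearGroup (Fin 2) A) (n : ℕ) :
    ((γ ^ n : SpecialLinearGroup (Fin 2) A) : Matrix (Fin 2) (Fin 2) A).trace =
      aeval (γ : Matrix (Fin 2) (Fin 2) A).trace (dickson 1 (1 : R) n) := by
  rw [coe_pow, Matrix.trace_pow_eq_eval_dickson, γ.2, aeval_def, eval₂_eq_eval_map, map_dickson,
    map_one]

theorem isIntegral_trace_of_isIntegral_trace_pow [Nontrivial R] (γ : SpecialLinearGroup (Fin 2) A)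
    {n : ℕ} (hn : n ≠ 0)
    (h : IsIntegral R ((γ ^ n : SpecialLinearGroup (Fin 2) A) : Matrix (Fin 2) (Fin 2) A).trace) :
    IsIntegral R (γ : Matrix (Fin 2) (Fin 2) A).trace := by
  rw [trace_pow_eq_aeval_dickson (R := R)] at h
  exact h.of_aeval_monic (dickson_monic hn) (by rwa [natDegree_dickson hn])

end Matrix.SpecialLinearGroup

/-- Let `Γ ≤ SL(2, ℂ)` and let `Δ` be a subgroup of `Γ` of finite index. Then
every element of `Γ` has algebraic-integer trace iff every element of `Δ` has
algebraic-integer trace. -/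
theorem stmt_4 (Γ Δ : Subgroup (Matrix.SpecialLinearGroup (Fin 2) ℂ))
    (hle : Δ ≤ Γ) (hfin : Δ.relIndex Γ ≠ 0) :
    (∀ γ ∈ Γ, IsIntegral ℤ (Matrix.trace (γ : Matrix (Fin 2) (Fin 2) ℂ))) ↔
      (∀ δ ∈ Δ, IsIntegral ℤ (Matrix.trace (δ : Matrix (Fin 2) (Fin 2) ℂ))) := by
  refine ⟨fun h δ hδ => h δ (hle hδ), fun h γ hγ => ?_⟩
  obtain ⟨k, hk, -, hγk, -⟩ := Subgroup.exists_pow_mem_of_relIndex_ne_zero hfin hγ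
  exact γ.isIntegral_trace_of_isIntegral_trace_pow hk.ne' (h _ hγk)
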